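/- arXiv:1710.07411 — 4 statements merged into one kernel-verified Lean document; each statement's English description precedes it below -/
import Mathlib

section
/- For every node a belonging to V, the set Vstar(a) computed by the recurrences is a nonempty subset of V ∩ subtree(a), and the dynamic-programming values are consistent with the recursively defined objective: sigma(a) = Cost_a(Vstar(a)) and xistar(a) = Σ_{d ∈ Vstar(a)} xi(d). -/
/-!
Theorem 1 of "STREAK" (dynamic-programming node selection in the S-QuadTree),
consistency of the DP values with the recursively defined objective.

Nodes of a finite rooted tree are represented by paths (lists of child indices)
from the root.
-/

open scoped Classical

/-- `List.enum` (removed from the library), with its old meaning: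
`l.enum = [(0, l[0]), (1, l[1]), …]`. -/
def List.enum {α : Type _} (l : List α) : List (ℕ × α) := l.zipIdx.map Prod.swap

theorem List.enum_map_snd {α : Type _} (l : List α) : l.enum.map Prod.snd = l := by
  simp [List.enum, Function.comp_def]

/-- A finite rooted tree: each node has a finite list of children. -/
inductive RTree : Type where
  | node : List RTree → RTree

namespace RTree

/-- The subtree reached by following a path of child indices, if it exists. -/
def subAt : RTree → List ℕ → Option RTree
  | t, [] => some t
  | node cs, i :: p =>
    match cs[i]? with
    | some c => subAt c p
    | none => none
termination_by t p => p.length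

/-- A path is a node of the tree if following it leads to a subtree. -/
def valid (t : RTree) (p : List ℕ) : Prop := (t.subAt p).isSome

/-- `subtreeOf t p` is the set of nodes of `t` consisting of `p` together with
all of its descendants (nodes whose path extends `p`). -/
def subtreeOf (t : RTree) (p : List ℕ) : Set (List ℕ) :=
  {q | t.valid q ∧ p <+: q}

/-- The dynamic program of Theorem 1: for the subtree rooted at path `p`,
compute `(Vstar p, sigma p, xistar p)` by the recurrences.  If `p ∉ V` the
value is `(∅, 0, 0)`; if `p` is a `V`-leaf (no child in `V`) it is
`({p}, cost p, xi p)`; otherwise, with `γ` the children of `p` belonging to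
`V`, `μ = Σ_{j ∈ γ} xistar j` if `|γ| > 1` and `0` otherwise, the value is
`({p}, cost p, xi p)` when `cost p < μ + Σ_{j ∈ γ} sigma j`, and
`(⋃_{j ∈ γ} Vstar j, Σ_{j ∈ γ} sigma j + μ, Σ_{j ∈ γ} xistar j)` otherwise. -/
noncomputable def dp (V : Set (List ℕ)) (cost xi : List ℕ → ℝ) :
    RTree → List ℕ → Set (List ℕ) × ℝ × ℝ
  | node cs, p =>
    let recs := cs.enum.attach.map fun x =>
      (p ++ [x.1.1], dp V cost xi x.1.2 (p ++ [x.1.1]))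
    if p ∈ V then
      let γ := recs.filter fun r => decide (r.1 ∈ V)
      if γ.isEmpty then ({p}, cost p, xi p)
      else
        let σsum := (γ.map fun r => r.2.2.1).sum
        let ξsum := (γ.map fun r => r.2.2.2).sum
        let μ := if 1 < γ.length then ξsum else 0
        if cost p < μ + σsum then ({p}, cost p, xi p)
        else (⋃ r ∈ γ, r.2.1, σsum + μ, ξsum)
    else (∅, 0, 0)
termination_by t _ => sizeOf t
decreasing_by
  simp_wf
  have hx : x.1.2 ∈ cs := by
    have h1 : x.1.2 ∈ cs.enum.map Prod.snd := List.mem_map_of_mem x.2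
    simpa [List.enum_map_snd] using h1
  have := List.sizeOf_lt_of_mem hx
  omega

/-- `Vstar a`, for a node `a` of the tree `t`. -/
noncomputable def VstarAt (t : RTree) (V : Set (List ℕ)) (cost xi : List ℕ → ℝ)
    (p : List ℕ) : Set (List ℕ) :=
  match t.subAt p with
  | some s => (dp V cost xi s p).1
  | none => ∅

/-- `sigma a`, for a node `a` of the tree `t`. -/
noncomputable def sigmaAt (t : RTree) (V : Set (List ℕ)) (cost xi : List ℕ → ℝ)
    (p : List ℕ) : ℝ :=
  match t.subAt p with
  | some s => (dp V cost xi s p).2.1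
  | none => 0

/-- `xistar a`, for a node `a` of the tree `t`. -/
noncomputable def xistarAt (t : RTree) (V : Set (List ℕ)) (cost xi : List ℕ → ℝ)
    (p : List ℕ) : ℝ :=
  match t.subAt p with
  | some s => (dp V cost xi s p).2.2
  | none => 0

/-- The objective `Cost_a(S)` for the subtree rooted at path `p` (first tree
argument: the subtree of the global tree `t` rooted at `p`):
`Cost_a(S) = (cost a if a ∈ S else 0) + Σ_{c child of a} Cost_c(S ∩ subtree(c)) + P(a, S)`,
where `P(a, S)` is the sum over children `c` with `S ∩ subtree(c) ≠ ∅` of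
`Σ_{d ∈ S ∩ subtree(c)} xi d` when at least two children have
`S ∩ subtree(c) ≠ ∅`, and `0` otherwise. -/
noncomputable def costOf (t : RTree) (cost xi : List ℕ → ℝ) :
    RTree → List ℕ → Set (List ℕ) → ℝ
  | node cs, p, S =>
    let recs := cs.enum.attach.map fun x =>
      (S ∩ subtreeOf t (p ++ [x.1.1]),
        costOf t cost xi x.1.2 (p ++ [x.1.1]) (S ∩ subtreeOf t (p ++ [x.1.1])))
    (if p ∈ S then cost p else 0)
      + (recs.map fun r => r.2).sum
      + (if 2 ≤ (recs.filter fun r => decide r.1.Nonempty).length then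
          ((recs.filter fun r => decide r.1.Nonempty).map fun r => ∑' d : r.1, xi d.1).sum
        else 0)
termination_by s _ _ => sizeOf s
decreasing_by
  simp_wf
  have hx : x.1.2 ∈ cs := by
    have h1 : x.1.2 ∈ cs.enum.map Prod.snd := List.mem_map_of_mem x.2
    simpa [List.enum_map_snd] using h1
  have := List.sizeOf_lt_of_mem hx
  omega

/-- `Cost_a(S)`, for a node `a` of the tree `t`. -/
noncomputable def CostAt (t : RTree) (cost xi : List ℕ → ℝ)
    (p : List ℕ) (S : Set (List ℕ)) : ℝ :=
  match t.subAt p with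
  | some s => costOf t cost xi s p S
  | none => 0

end RTree

/-
By well-founded recursion on the subtree. The output at a node `a` is either `{a}`, whose cost
is `cost a` because no child subtree meets it, or the union of the outputs of the children in
`V`. These lie in pairwise disjoint child subtrees, so each child subtree meets the union exactly
in that child's output; hence `Cost_a` of the union is the sum of the children's costs plus the
merge penalty over exactly those children, which is `μ(a)`, and `Σ xi` over the union is the sum
of the children's `xistar`.
-/

open Function

theorem List.mem_enum_iff_getElem? {α : Type*} {l : List α} {i : ℕ} {x : α} :
    (i, x) ∈ l.enum ↔ l[i]? = some x := by
  simp [List.enum, List.mem_zipIdx_iff_getElem?]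

theorem List.nodup_enum {α : Type*} (l : List α) : l.enum.Nodup := by
  refine List.Nodup.of_map Prod.fst ?_
  simpa [List.enum, List.map_map, Function.comp_def, List.zipIdx_map_snd] using
    List.nodup_range' (s := 0) (n := l.length)

theorem List.eq_of_mem_enum_of_fst_eq {α : Type*} {l : List α} {a b : ℕ × α}
    (ha : a ∈ l.enum) (hb : b ∈ l.enum) (h : a.1 = b.1) : a = b := by
  obtain ⟨i, x⟩ := a
  obtain ⟨j, y⟩ := b
  obtain rfl : i = j := h
  rw [List.mem_enum_iff_getElem?] at ha hb
  rw [Option.some_injective _ (ha.symm.trans hb)]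

theorem List.eq_of_append_singleton_prefix {α : Type*} {p q : List α} {i j : α}
    (hi : p ++ [i] <+: q) (hj : p ++ [j] <+: q) : i = j := by
  have h := List.prefix_of_prefix_length_le hi hj (by simp)
  simpa using h.eq_of_length (by simp)

theorem Set.biUnion_list_map {ι κ α : Type*} (L : List ι) (f : ι → κ) (g : κ → Set α) :
    ⋃ r ∈ L.map f, g r = ⋃ x ∈ L, g (f x) := by
  ext; simp

theorem tsum_biUnion_list {ι α M : Type*} [AddCommMonoid M] [TopologicalSpace M]
    [ContinuousAdd M] [T2Space M] (f : α → M) (W : ι → Set α) :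
    ∀ L : List ι, (∀ i ∈ L, (W i).Finite) → L.Pairwise (Disjoint on W) →
      ∑' d : ⋃ i ∈ L, W i, f d = (L.map fun i => ∑' d : W i, f d).sum
  | [], _, _ => by simp
  | i :: L, hfin, hdisj => by
    rw [List.pairwise_cons] at hdisj
    have hfinL : ∀ j ∈ L, (W j).Finite := fun j hj => hfin j (List.mem_cons_of_mem _ hj)
    have hunion : ⋃ j ∈ i :: L, W j = W i ∪ ⋃ j ∈ L, W j := by
      ext; simp
    have hdisj_union : Disjoint (W i) (⋃ j ∈ L, W j) :=
      Set.disjoint_iUnion₂_right.2 hdisj.1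
    have hfin_union : (⋃ j ∈ L, W j).Finite := L.finite_toSet.biUnion hfinL
    rw [hunion, Summable.tsum_union_disjoint hdisj_union
      ((hfin i List.mem_cons_self).summable f) (hfin_union.summable f),
      tsum_biUnion_list f W L hfinL hdisj.2, List.map_cons, List.sum_cons]

namespace RTree

theorem subAt_append (t : RTree) (p q : List ℕ) :
    t.subAt (p ++ q) = (t.subAt p).bind (·.subAt q) := by
  induction p generalizing t with
  | nil => simp [subAt]
  | cons i p ih =>
    obtain ⟨cs⟩ := t
    rw [List.cons_append, subAt]
    cases h : cs[i]? <;> simp [subAt, h, ih]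

theorem subAt_append_singleton {t : RTree} {cs : List RTree} {p : List ℕ} {i : ℕ} {c : RTree}
    (hs : t.subAt p = some (node cs)) (hc : (i, c) ∈ cs.enum) :
    t.subAt (p ++ [i]) = some c := by
  simp [subAt_append, hs, subAt, List.mem_enum_iff_getElem?.1 hc]

theorem sizeOf_lt_of_mem_enum {cs : List RTree} {ic : ℕ × RTree} (h : ic ∈ cs.enum) :
    sizeOf ic.2 < sizeOf (node cs) := by
  have hmem : ic.2 ∈ cs := by simpa [List.enum_map_snd] using List.mem_map_of_mem (f := Prod.snd) h
  have := List.sizeOf_lt_of_mem hmem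
  simp only [node.sizeOf_spec]
  omega

section Subtrees

variable {t : RTree} {p : List ℕ} {i : ℕ}

theorem subtreeOf_append_singleton_subset : t.subtreeOf (p ++ [i]) ⊆ t.subtreeOf p :=
  fun _ ⟨hq, hpre⟩ => ⟨hq, (List.prefix_append p [i]).trans hpre⟩

theorem notMem_subtreeOf_append_singleton : p ∉ t.subtreeOf (p ++ [i]) := by
  rintro ⟨-, hpre⟩
  simpa using hpre.length_le

theorem disjoint_subtreeOf_append_singleton {j : ℕ} (h : i ≠ j) :
    Disjoint (t.subtreeOf (p ++ [i])) (t.subtreeOf (p ++ [j])) :=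
  Set.disjoint_left.2 fun _ hi hj => h (List.eq_of_append_singleton_prefix hi.2 hj.2)

theorem pairwise_disjoint_subtreeOf_attach_enum (cs : List RTree) :
    cs.enum.attach.Pairwise
      (Disjoint on fun x : {x // x ∈ cs.enum} => t.subtreeOf (p ++ [x.1.1])) :=
  (List.nodup_attach.2 (List.nodup_enum cs)).imp fun hne =>
    disjoint_subtreeOf_append_singleton fun h =>
      hne (Subtype.ext (List.eq_of_mem_enum_of_fst_eq (Subtype.prop _) (Subtype.prop _) h))

theorem biUnion_inter_subtreeOf_append_singleton {cs : List RTree}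
    (L : List {x // x ∈ cs.enum}) (W : {x // x ∈ cs.enum} → Set (List ℕ))
    (hW : ∀ x ∈ L, W x ⊆ t.subtreeOf (p ++ [x.1.1])) (x : {x // x ∈ cs.enum}) :
    (⋃ y ∈ L, W y) ∩ t.subtreeOf (p ++ [x.1.1]) = if x ∈ L then W x else ∅ := by
  have hchild : ∀ y ∈ L, ∀ q ∈ W y, q ∈ t.subtreeOf (p ++ [x.1.1]) → y = x :=
    fun y hy q hq hqx => Subtype.ext <| List.eq_of_mem_enum_of_fst_eq y.2 x.2 <|
      List.eq_of_append_singleton_prefix (hW y hy hq).2 hqx.2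
  ext q
  simp only [Set.mem_inter_iff, Set.mem_iUnion₂]
  constructor
  · rintro ⟨⟨y, hy, hq⟩, hqx⟩
    obtain rfl := hchild y hy q hq hqx
    simpa [hy] using hq
  · split_ifs with hx
    · exact fun hq => ⟨⟨x, hx, hq⟩, hW x hx hq⟩
    · exact False.elim

end Subtrees

section Cost

variable {t : RTree} {cost xi : List ℕ → ℝ}

theorem costOf_empty : ∀ (s : RTree) (p : List ℕ), costOf t cost xi s p ∅ = 0
  | node cs, p => by
    have hchildren :
        (cs.enum.attach.map fun x => costOf t cost xi x.1.2 (p ++ [x.1.1]) ∅).sum = 0 :=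
      List.sum_eq_zero fun _ hy => by
        obtain ⟨x, -, rfl⟩ := List.mem_map.1 hy
        exact costOf_empty x.1.2 _
    rw [costOf]
    simp [List.map_map, Function.comp_def, hchildren, List.filter_map]
termination_by s => sizeOf s
decreasing_by exact sizeOf_lt_of_mem_enum x.2

theorem costOf_node_of_inter_subtreeOf {cs : List RTree} {p : List ℕ} {S : Set (List ℕ)}
    (P : {x // x ∈ cs.enum} → Prop) [DecidablePred P] (W : {x // x ∈ cs.enum} → Set (List ℕ))
    (hS : ∀ x, S ∩ t.subtreeOf (p ++ [x.1.1]) = if P x then W x else ∅)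
    (hW : ∀ x, P x → (W x).Nonempty) :
    costOf t cost xi (node cs) p S =
      (if p ∈ S then cost p else 0)
        + ((cs.enum.attach.filter P).map fun x => costOf t cost xi x.1.2 (p ++ [x.1.1]) (W x)).sum
        + if 2 ≤ (cs.enum.attach.filter P).length then
            ((cs.enum.attach.filter P).map fun x => ∑' d : W x, xi d).sum
          else 0 := by
  have hnonempty : cs.enum.attach.filter (fun x => (if P x then W x else ∅).Nonempty)
      = cs.enum.attach.filter P :=
    List.filter_congr fun x _ => by by_cases hx : P x <;> simp [hx, hW]
  rw [costOf]
  simp only [hS, List.map_map, List.filter_map, Function.comp_def, apply_ite (costOf _ _ _ _ _),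
    costOf_empty, List.sum_map_ite, hnonempty, List.length_map]
  have hpenalty : ((cs.enum.attach.filter P).map fun x => ∑' d : ↑(if P x then W x else ∅), xi d)
      = (cs.enum.attach.filter P).map fun x => ∑' d : W x, xi d :=
    List.map_congr_left fun x hx => by rw [if_pos (by simpa using (List.mem_filter.1 hx).2)]
  simp [hpenalty]

end Cost

theorem dp_node_of_mem {V : Set (List ℕ)} {cost xi : List ℕ → ℝ} {cs : List RTree} {p : List ℕ}
    (hp : p ∈ V) :
    dp V cost xi (node cs) p =
      let L := cs.enum.attach.filter fun x => p ++ [x.1.1] ∈ V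
      let D := fun x : {x // x ∈ cs.enum} => dp V cost xi x.1.2 (p ++ [x.1.1])
      let σsum := (L.map fun x => (D x).2.1).sum
      let ξsum := (L.map fun x => (D x).2.2).sum
      let μ := if 1 < L.length then ξsum else 0
      if L = [] ∨ cost p < μ + σsum then ({p}, cost p, xi p)
      else (⋃ x ∈ L, (D x).1, σsum + μ, ξsum) := by
  rw [dp, if_pos hp]
  simp only [List.filter_map, List.isEmpty_iff, List.map_eq_nil_iff, List.length_map, List.map_map,
    Function.comp_def, Set.biUnion_list_map, ite_or]

/-- `r = (Vstar, sigma, xistar)` is a correct output of the dynamic program at the node `p`,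
whose subtree is `s`. -/
structure ConsistentAt (t : RTree) (V : Set (List ℕ)) (cost xi : List ℕ → ℝ) (s : RTree)
    (p : List ℕ) (r : Set (List ℕ) × ℝ × ℝ) : Prop where
  nonempty : r.1.Nonempty
  finite : r.1.Finite
  subset : r.1 ⊆ V ∩ t.subtreeOf p
  sigma_eq : r.2.1 = costOf t cost xi s p r.1
  xistar_eq : r.2.2 = ∑' d : r.1, xi d

section Consistency

variable {t : RTree} {V : Set (List ℕ)} {cost xi : List ℕ → ℝ} {cs : List RTree} {p : List ℕ}

theorem consistentAt_singleton (hvalid : t.valid p) (hp : p ∈ V) :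
    ConsistentAt t V cost xi (node cs) p ({p}, cost p, xi p) where
  nonempty := Set.singleton_nonempty p
  finite := Set.finite_singleton p
  subset := Set.singleton_subset_iff.2 ⟨hp, hvalid, List.prefix_refl p⟩
  sigma_eq := by
    have hS (x : {x // x ∈ cs.enum}) : {p} ∩ t.subtreeOf (p ++ [x.1.1]) = ∅ :=
      Set.singleton_inter_eq_empty.2 notMem_subtreeOf_append_singleton
    rw [costOf_node_of_inter_subtreeOf (fun _ => False) (fun _ => ∅) (by simpa only [if_false])
      (fun _ => False.elim)]
    simp
  xistar_eq := (tsum_singleton p xi).symm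

theorem consistentAt_biUnion (P : {x // x ∈ cs.enum} → Prop) [DecidablePred P]
    (D : {x // x ∈ cs.enum} → Set (List ℕ) × ℝ × ℝ) (hP : cs.enum.attach.filter P ≠ [])
    (hD : ∀ x ∈ cs.enum.attach.filter P, ConsistentAt t V cost xi x.1.2 (p ++ [x.1.1]) (D x)) :
    ConsistentAt t V cost xi (node cs) p
      (⋃ x ∈ cs.enum.attach.filter P, (D x).1,
        ((cs.enum.attach.filter P).map fun x => (D x).2.1).sum
          + (if 1 < (cs.enum.attach.filter P).length then
              ((cs.enum.attach.filter P).map fun x => (D x).2.2).sum else 0),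
        ((cs.enum.attach.filter P).map fun x => (D x).2.2).sum) := by
  set L := cs.enum.attach.filter P
  have hmem (x) : x ∈ L ↔ P x := by simp [L]
  have hsub (x) (hx : x ∈ L) : (D x).1 ⊆ t.subtreeOf (p ++ [x.1.1]) :=
    fun _ hq => ((hD x hx).subset hq).2
  have hS (x : {x // x ∈ cs.enum}) :
      (⋃ y ∈ L, (D y).1) ∩ t.subtreeOf (p ++ [x.1.1]) = if P x then (D x).1 else ∅ := by
    rw [biUnion_inter_subtreeOf_append_singleton L (fun y => (D y).1) hsub x]
    exact if_congr (hmem x) rfl rfl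
  have hp : p ∉ ⋃ y ∈ L, (D y).1 := by
    simp only [Set.mem_iUnion₂, not_exists]
    exact fun y hy hq => notMem_subtreeOf_append_singleton (hsub y hy hq)
  obtain ⟨x₀, hx₀⟩ := List.exists_mem_of_ne_nil L hP
  refine ⟨((hD x₀ hx₀).nonempty).mono (Set.subset_biUnion_of_mem (u := fun y => (D y).1) hx₀),
    L.finite_toSet.biUnion fun x hx => (hD x hx).finite,
    Set.iUnion₂_subset fun x hx => (hD x hx).subset.trans
      (Set.inter_subset_inter_right V subtreeOf_append_singleton_subset), ?_, ?_⟩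
  · rw [costOf_node_of_inter_subtreeOf P (fun x => (D x).1) hS
      (fun x hx => (hD x ((hmem x).2 hx)).nonempty), if_neg hp, zero_add]
    have hsigma : (L.map fun x => (D x).2.1)
        = L.map fun x => costOf t cost xi x.1.2 (p ++ [x.1.1]) (D x).1 :=
      List.map_congr_left fun x hx => (hD x hx).sigma_eq
    have hxistar : (L.map fun x => (D x).2.2) = L.map fun x => ∑' d : (D x).1, xi d :=
      List.map_congr_left fun x hx => (hD x hx).xistar_eq
    dsimp only
    rw [hsigma, hxistar]
    rfl
  · rw [tsum_biUnion_list xi (fun x => (D x).1) L (fun x hx => (hD x hx).finite)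
      (((pairwise_disjoint_subtreeOf_attach_enum cs).filter P).imp_of_mem
        fun hx hy h => h.mono (hsub _ hx) (hsub _ hy))]
    exact congrArg List.sum (List.map_congr_left fun x hx => (hD x hx).xistar_eq)

theorem consistentAt_dp :
    ∀ (s : RTree) (p : List ℕ), t.subAt p = some s → p ∈ V →
      ConsistentAt t V cost xi s p (dp V cost xi s p)
  | node cs, p, hs, hp => by
    have hchildren : ∀ x ∈ cs.enum.attach.filter (fun x => p ++ [x.1.1] ∈ V),
        ConsistentAt t V cost xi x.1.2 (p ++ [x.1.1]) (dp V cost xi x.1.2 (p ++ [x.1.1])) :=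
      fun x hx => consistentAt_dp x.1.2 _ (subAt_append_singleton hs x.2)
        (by simpa using (List.mem_filter.1 hx).2)
    rw [dp_node_of_mem hp]
    dsimp only
    rw [apply_ite (ConsistentAt t V cost xi (node cs) p), ite_prop_iff_and]
    exact ⟨fun _ => consistentAt_singleton (Option.isSome_iff_exists.2 ⟨_, hs⟩) hp,
      fun hstop => consistentAt_biUnion _ _ (not_or.1 hstop).1 hchildren⟩
termination_by s => sizeOf s
decreasing_by exact sizeOf_lt_of_mem_enum x.2

end Consistency

end RTree

open RTree in
theorem streak_dp_consistency_general
    (t : RTree) (V : Set (List ℕ)) (cost xi : List ℕ → ℝ) :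
    ∀ a : List ℕ, t.valid a → a ∈ V →
      (VstarAt t V cost xi a).Nonempty ∧
      VstarAt t V cost xi a ⊆ V ∩ subtreeOf t a ∧
      sigmaAt t V cost xi a = CostAt t cost xi a (VstarAt t V cost xi a) ∧
      xistarAt t V cost xi a = ∑' d : (VstarAt t V cost xi a : Set (List ℕ)), xi d.1 := by
  intro a ha haV
  obtain ⟨s, hs⟩ := Option.isSome_iff_exists.1 ha
  have h : ConsistentAt t V cost xi s a (dp V cost xi s a) := consistentAt_dp s a hs haV
  have hVstar : VstarAt t V cost xi a = (dp V cost xi s a).1 := by rw [VstarAt, hs]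
  rw [hVstar]
  simp only [sigmaAt, xistarAt, CostAt, hs]
  exact ⟨h.nonempty, h.subset, h.sigma_eq, h.xistar_eq⟩

open RTree in
/-- For every node `a ∈ V`, the set `Vstar(a)` computed by the recurrences is a
nonempty subset of `V ∩ subtree(a)`, and the DP values are consistent with the
recursively defined objective: `sigma(a) = Cost_a(Vstar(a))` and
`xistar(a) = Σ_{d ∈ Vstar(a)} xi(d)`. -/
theorem streak_dp_consistency
    (t : RTree) (V : Set (List ℕ)) (cost xi : List ℕ → ℝ)
    (hVnodes : ∀ p ∈ V, t.valid p)
    (hanc : ∀ (p : List ℕ) (i : ℕ), p ++ [i] ∈ V → p ∈ V)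
    (hcost : ∀ p, 0 ≤ cost p) (hxi : ∀ p, 0 ≤ xi p) :
    ∀ a : List ℕ, t.valid a → a ∈ V →
      (VstarAt t V cost xi a).Nonempty ∧
      VstarAt t V cost xi a ⊆ V ∩ subtreeOf t a ∧
      sigmaAt t V cost xi a = CostAt t cost xi a (VstarAt t V cost xi a) ∧
      xistarAt t V cost xi a = ∑' d : (VstarAt t V cost xi a : Set (List ℕ)), xi d.1 :=
  streak_dp_consistency_general t V cost xi
end

section
/- Let a be a node belonging to V and let S be feasible for subtree(a) with a ∉ S. Then for every child c of a with c ∈ V, the set S ∩ subtree(c) is nonempty and feasible for subtree(c). (This is the decomposition step in the proof of Theorem 1: a feasible selection not containing the root of the subtree decomposes into nonempty feasible selections in each candidate child subtree.) -/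
namespace RTree

/-- A node `p ∈ V` is a `V`-leaf if no child of `p` belongs to `V`. -/
def VLeaf (t : RTree) (V : Set (List ℕ)) (p : List ℕ) : Prop :=
  p ∈ V ∧ t.valid p ∧ ∀ i : ℕ, p ++ [i] ∉ V

/-- `S` is feasible for the subtree rooted at `p`: `S ⊆ V ∩ subtree(p)` and
every `V`-leaf lying in `subtree(p)` has an ancestor-or-self, itself lying in
`subtree(p)`, that belongs to `S`. -/
def Feasible (t : RTree) (V : Set (List ℕ)) (p : List ℕ) (S : Set (List ℕ)) : Prop :=
  S ⊆ V ∩ subtreeOf t p ∧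
  ∀ q, VLeaf t V q → q ∈ subtreeOf t p →
    ∃ r ∈ S, r ∈ subtreeOf t p ∧ r <+: q

end RTree

theorem List.concat_prefix_of_prefix_of_ne {α : Type*} {a r q : List α} {x : α}
    (har : a <+: r) (hne : a ≠ r) (hrq : r <+: q) (haq : a ++ [x] <+: q) :
    a ++ [x] <+: r := by
  refine List.prefix_of_prefix_length_le haq hrq ?_
  have := lt_of_le_of_ne har.length_le (mt har.eq_of_length hne)
  simpa using this

namespace RTree

def size : RTree → ℕ
  | node cs => 1 + (cs.map size).sum

theorem size_lt_of_mem {cs : List RTree} {c : RTree} (h : c ∈ cs) :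
    c.size < (node cs).size := by
  have := List.le_sum_of_mem (List.mem_map_of_mem (f := size) h)
  rw [size]
  omega

theorem length_lt_size_of_valid {t : RTree} {p : List ℕ} (hp : t.valid p) :
    p.length < t.size := by
  induction p generalizing t with
  | nil => cases t; simp [size]
  | cons i p ih =>
    obtain ⟨cs⟩ := t
    unfold valid subAt at hp
    rcases hc : cs[i]? with _ | c
    · simp [hc] at hp
    · rw [hc] at hp
      have hc_lt := size_lt_of_mem (List.mem_of_getElem? hc)
      have hp_lt := ih hp
      simp only [List.length_cons]
      omega

variable {t : RTree} {V : Set (List ℕ)}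

theorem exists_vLeaf_prefix (hV : ∀ p ∈ V, t.valid p) {q : List ℕ} (hq : q ∈ V) :
    ∃ l, VLeaf t V l ∧ q <+: l := by
  by_cases hleaf : ∀ j, q ++ [j] ∉ V
  · exact ⟨q, ⟨hq, hV q hq, hleaf⟩, List.prefix_refl q⟩
  · obtain ⟨j, hj⟩ := not_forall_not.mp hleaf
    have hj_short := length_lt_size_of_valid (hV _ hj)
    obtain ⟨l, hl, hjl⟩ := exists_vLeaf_prefix hV hj
    exact ⟨l, hl, (List.prefix_append q [j]).trans hjl⟩
termination_by t.size - q.length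
decreasing_by simp only [List.length_append, List.length_singleton] at *; omega

theorem Feasible.nonempty {p : List ℕ} {S : Set (List ℕ)} (hS : Feasible t V p S)
    (hV : ∀ q ∈ V, t.valid q) (hpV : p ∈ V) : S.Nonempty := by
  obtain ⟨l, hl, hpl⟩ := exists_vLeaf_prefix hV hpV
  obtain ⟨r, hrS, -⟩ := hS.2 l hl ⟨hl.2.1, hpl⟩
  exact ⟨r, hrS⟩

theorem Feasible.inter_subtreeOf_child {a : List ℕ} {S : Set (List ℕ)}
    (hS : Feasible t V a S) (haS : a ∉ S) (i : ℕ) :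
    Feasible t V (a ++ [i]) (S ∩ subtreeOf t (a ++ [i])) := by
  refine ⟨fun r ⟨hrS, hr⟩ => ⟨(hS.1 hrS).1, hr⟩, ?_⟩
  rintro q hq ⟨hqt, hcq⟩
  obtain ⟨r, hrS, ⟨hrt, har⟩, hrq⟩ := hS.2 q hq ⟨hqt, (List.prefix_append a [i]).trans hcq⟩
  have hcr : a ++ [i] <+: r :=
    List.concat_prefix_of_prefix_of_ne har (fun h => haS (h ▸ hrS)) hrq hcq
  exact ⟨r, ⟨hrS, hrt, hcr⟩, ⟨hrt, hcr⟩, hrq⟩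

end RTree

open RTree in
theorem streak_decomposition_step_general
    (t : RTree) (V : Set (List ℕ))
    (hVnodes : ∀ p ∈ V, t.valid p)
    (a : List ℕ)
    (S : Set (List ℕ)) (hS : Feasible t V a S) (haS : a ∉ S) :
    ∀ i : ℕ, t.valid (a ++ [i]) → a ++ [i] ∈ V →
      (S ∩ subtreeOf t (a ++ [i])).Nonempty ∧
      Feasible t V (a ++ [i]) (S ∩ subtreeOf t (a ++ [i])) := by
  intro i _ hcV
  have hSc := hS.inter_subtreeOf_child haS i
  exact ⟨hSc.nonempty hVnodes hcV, hSc⟩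

open RTree in
/-- Let `a ∈ V` and let `S` be feasible for `subtree(a)` with `a ∉ S`.  Then
for every child `c` of `a` with `c ∈ V`, the set `S ∩ subtree(c)` is nonempty
and feasible for `subtree(c)`. -/
theorem streak_decomposition_step
    (t : RTree) (V : Set (List ℕ))
    (hVnodes : ∀ p ∈ V, t.valid p)
    (hanc : ∀ (p : List ℕ) (i : ℕ), p ++ [i] ∈ V → p ∈ V)
    (a : List ℕ) (ha : t.valid a) (haV : a ∈ V)
    (S : Set (List ℕ)) (hS : Feasible t V a S) (haS : a ∉ S) :
    ∀ i : ℕ, t.valid (a ++ [i]) → a ++ [i] ∈ V →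
      (S ∩ subtreeOf t (a ++ [i])).Nonempty ∧
      Feasible t V (a ++ [i]) (S ∩ subtreeOf t (a ++ [i])) :=
  streak_decomposition_step_general t V hVnodes a S hS haS
end

section
/- Let a be a node belonging to V that is not a V-leaf, and for each child c of a with c ∈ V let S_c be a set feasible for subtree(c). Then the union ⋃_c S_c, taken over the children c of a belonging to V, is feasible for subtree(a). (This is the composition step in the proof of Theorem 1: feasible selections in the candidate child subtrees combine into a feasible selection for the whole subtree.) -/
open RTree in
/-- Let `a ∈ V` be a node that is not a `V`-leaf, and for each child `c` of `a`
with `c ∈ V` let `Sel c` be a set feasible for `subtree(c)`.  Then the union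
`⋃_c Sel c`, taken over the children `c` of `a` belonging to `V`, is feasible
for `subtree(a)`. -/
theorem streak_composition_step
    (t : RTree) (V : Set (List ℕ))
    (hVnodes : ∀ p ∈ V, t.valid p)
    (hanc : ∀ (p : List ℕ) (i : ℕ), p ++ [i] ∈ V → p ∈ V)
    (a : List ℕ) (ha : t.valid a) (haV : a ∈ V)
    (hnotleaf : ¬ VLeaf t V a)
    (Sel : ℕ → Set (List ℕ))
    (hSel : ∀ i : ℕ, t.valid (a ++ [i]) → a ++ [i] ∈ V →
      Feasible t V (a ++ [i]) (Sel i)) :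
    Feasible t V a (⋃ i ∈ {i : ℕ | t.valid (a ++ [i]) ∧ a ++ [i] ∈ V}, Sel i) := by
  have hancStar : ∀ (p s : List ℕ), p ++ s ∈ V → p ∈ V := by
    intro p s
    induction s using List.reverseRecOn with
    | nil => simpa using id
    | append_singleton s i ih =>
      intro h
      exact ih (hanc (p ++ s) i (by simpa [List.append_assoc] using h))
  constructor
  · intro r hr
    simp only [Set.mem_iUnion] at hr
    obtain ⟨i, ⟨hvi, hVi⟩, hri⟩ := hr
    obtain ⟨hrV, hrvalid, hpre⟩ := (hSel i hvi hVi).1 hri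
    exact ⟨hrV, hrvalid, ((a.prefix_append [i]).trans hpre)⟩
  · intro q hq ⟨hqv, hpre⟩
    obtain ⟨s, rfl⟩ := hpre
    cases s with
    | nil =>
      exact absurd ⟨haV, ha, by simpa using hq.2.2⟩ hnotleaf
    | cons i s' =>
      have heq : a ++ i :: s' = (a ++ [i]) ++ s' := by simp
      have hVi : a ++ [i] ∈ V := hancStar _ s' (heq ▸ hq.1)
      have hvi : t.valid (a ++ [i]) := hVnodes _ hVi
      obtain ⟨r, hrS, ⟨hrv, hrpre⟩, hrle⟩ :=
        (hSel i hvi hVi).2 _ hq ⟨hqv, heq ▸ (a ++ [i]).prefix_append s'⟩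
      refine ⟨r, ?_, ⟨hrv, (a.prefix_append [i]).trans hrpre⟩, hrle⟩
      simp only [Set.mem_iUnion]
      exact ⟨i, ⟨hvi, hVi⟩, hrS⟩
end

section
/- For all x, y, l ∈ ℕ, ⌊m(x, y) / 4^l⌋ = m(⌊x / 2^l⌋, ⌊y / 2^l⌋) (integer division). Consequently, for all x1, y1, x2, y2, l ∈ ℕ: ⌊m(x1, y1) / 4^l⌋ = ⌊m(x2, y2) / 4^l⌋ if and only if ⌊x1 / 2^l⌋ = ⌊x2 / 2^l⌋ and ⌊y1 / 2^l⌋ = ⌊y2 / 2^l⌋. That is, two grid points lie in the same quadtree cell obtained after discarding l levels of resolution exactly when their Z-orders share the corresponding high-order prefix; hence the identifiers of spatial objects assigned within one quadtree node occupy a contiguous range in the Z-order identifier space (the I-Range property). -/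
/-- The `i`-th binary digit of `n` (an element of `{0, 1}`). -/
def bit (n i : ℕ) : ℕ := n / 2 ^ i % 2

/-- The Morton (Z-order) interleaving function
`m(x, y) = Σ_i (bit_i(x) + 2 · bit_i(y)) · 4 ^ i`:
the `(2i)`-th binary digit of `m(x, y)` is the `i`-th binary digit of `x` and
the `(2i+1)`-th binary digit of `m(x, y)` is the `i`-th binary digit of `y`.
(All binary digits of `x` and of `y` in positions `≥ x + y + 1` vanish, so the
finite sum below realizes the full interleaving.) -/
def morton (x y : ℕ) : ℕ :=
  ∑ i ∈ Finset.range (x + y + 1), (bit x i + 2 * bit y i) * 4 ^ i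

/-!
The defining sum splits off its lowest digit pair:
`m(x, y) = x mod 2 + 2 (y mod 2) + 4 m(⌊x/2⌋, ⌊y/2⌋)`.
Hence dividing by `4` halves both coordinates, which iterates to the first claim, and
`m(x, y) mod 4` recovers the lowest bits of `x` and `y`, which by induction makes `m`
injective; the second claim is injectivity applied to the right-hand side of the first.
-/

lemma bit_eq_zero_of_lt_two_pow {a i : ℕ} (h : a < 2 ^ i) : bit a i = 0 := by
  simp [bit, Nat.div_eq_of_lt h]

lemma bit_zero (a : ℕ) : bit a 0 = a % 2 := by
  simp [bit]

lemma bit_succ (a i : ℕ) : bit a (i + 1) = bit (a / 2) i := by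
  rw [bit, bit, pow_succ, Nat.mul_comm, ← Nat.div_div_eq_div_mul]

lemma sum_range_eq_morton {a b n : ℕ} (hn : a + b + 1 ≤ n) :
    ∑ i ∈ Finset.range n, (bit a i + 2 * bit b i) * 4 ^ i = morton a b := by
  refine (Finset.sum_subset (Finset.range_subset_range.mpr hn) fun i _ hi => ?_).symm
  simp only [Finset.mem_range, not_lt] at hi
  have hlt : ∀ c, c ≤ a + b → c < 2 ^ i := fun c hc =>
    (show c < i by omega).trans Nat.lt_two_pow_self
  rw [bit_eq_zero_of_lt_two_pow (hlt a (by omega)), bit_eq_zero_of_lt_two_pow (hlt b (by omega))]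
  ring

lemma morton_eq_mod_add_four_mul_morton_div (x y : ℕ) :
    morton x y = x % 2 + 2 * (y % 2) + 4 * morton (x / 2) (y / 2) := by
  rcases Nat.eq_zero_or_pos (x + y) with h | h
  · obtain ⟨rfl, rfl⟩ : x = 0 ∧ y = 0 := by omega
    simp [morton, bit]
  · have hshift : ∀ i, (bit x (i + 1) + 2 * bit y (i + 1)) * 4 ^ (i + 1)
        = 4 * ((bit (x / 2) i + 2 * bit (y / 2) i) * 4 ^ i) := fun i => by
      rw [bit_succ, bit_succ, pow_succ]
      ring
    rw [morton, Finset.sum_range_succ']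
    simp only [hshift]
    rw [← Finset.mul_sum, sum_range_eq_morton (by omega), bit_zero, bit_zero]
    ring

lemma morton_div_four (x y : ℕ) : morton x y / 4 = morton (x / 2) (y / 2) := by
  rw [morton_eq_mod_add_four_mul_morton_div x y]
  omega

lemma morton_mod_four (x y : ℕ) : morton x y % 4 = x % 2 + 2 * (y % 2) := by
  rw [morton_eq_mod_add_four_mul_morton_div x y]
  omega

lemma morton_div_four_pow (x y l : ℕ) :
    morton x y / 4 ^ l = morton (x / 2 ^ l) (y / 2 ^ l) := by
  induction l with
  | zero => simp
  | succ l ih =>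
    rw [pow_succ, ← Nat.div_div_eq_div_mul, ih, morton_div_four,
      Nat.div_div_eq_div_mul, Nat.div_div_eq_div_mul, ← pow_succ]

lemma morton_injective2 : Function.Injective2 morton := by
  intro x₁ x₂ y₁ y₂ h
  induction hn : x₁ + x₂ + y₁ + y₂ using Nat.strong_induction_on
      generalizing x₁ x₂ y₁ y₂ with
  | _ n ih =>
    rcases Nat.eq_zero_or_pos n with rfl | hpos
    · omega
    have hlow := morton_mod_four x₁ y₁
    rw [h, morton_mod_four] at hlow
    have hhigh : morton (x₁ / 2) (y₁ / 2) = morton (x₂ / 2) (y₂ / 2) := by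
      rw [← morton_div_four, ← morton_div_four, h]
    have := ih _ (by omega) hhigh rfl
    omega

/-- For all `x, y, l ∈ ℕ`, `⌊m(x, y) / 4^l⌋ = m(⌊x / 2^l⌋, ⌊y / 2^l⌋)` (integer
division); consequently two grid points lie in the same quadtree cell obtained
after discarding `l` levels of resolution exactly when their Z-orders share the
corresponding high-order prefix (the I-Range property). -/
theorem morton_prefix_property :
    (∀ x y l : ℕ, morton x y / 4 ^ l = morton (x / 2 ^ l) (y / 2 ^ l)) ∧
    (∀ x1 y1 x2 y2 l : ℕ,
      morton x1 y1 / 4 ^ l = morton x2 y2 / 4 ^ l ↔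
        x1 / 2 ^ l = x2 / 2 ^ l ∧ y1 / 2 ^ l = y2 / 2 ^ l) := by
  refine ⟨morton_div_four_pow, fun x₁ y₁ x₂ y₂ l => ?_⟩
  rw [morton_div_four_pow, morton_div_four_pow]
  exact morton_injective2.eq_iff
end
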